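/- Let A be a convex acceptance set in an ordered topological vector space X and S a traded asset such that ρ_{A,S} does not attain −∞. Then the core of Dom(ρ_{A,S}) is nonempty if and only if the core of A is nonempty. In particular, if ρ_{A,S} is finitely valued, then Core(A) is nonempty. -/

import Mathlib

open Filter Topology

variable {X : Type*} [AddCommGroup X] [Module ℝ X] [PartialOrder X]
  [CovariantClass X X (· + ·) (· ≤ ·)] [PosSMulMono ℝ X]
  [TopologicalSpace X] [IsTopologicalAddGroup X] [ContinuousSMul ℝ X]

/-- The risk measure `ρ_{A,S}(x) = inf {m : x + (m/S₀)·S_T ∈ A}`, valued in `EReal`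
(with `inf ∅ = ⊤` and unbounded-below giving `⊥`). -/
noncomputable def rho (A : Set X) (S0 : ℝ) (ST : X) (x : X) : EReal :=
  sInf ((fun r : ℝ => (r : EReal)) '' {r : ℝ | x + (r / S0) • ST ∈ A})

/-- A set is monotone if it contains, with any element, every larger element. -/
def MonotoneSet (A : Set X) : Prop := ∀ x ∈ A, ∀ y, x ≤ y → y ∈ A

/-- An acceptance set: nonempty, proper, and monotone. -/
def AcceptanceSet (A : Set X) : Prop := A.Nonempty ∧ A ≠ Set.univ ∧ MonotoneSet A

/-- The algebraic core (algebraic interior) of a set. -/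
def algCore (A : Set X) : Set X :=
  {x | ∀ y : X, ∃ ε > 0, ∀ l : ℝ, |l| < ε → x + l • y ∈ A}

/-- The domain of finiteness of ρ_{A,S}. -/
noncomputable def rhoDom (A : Set X) (S0 : ℝ) (ST : X) : Set X :=
  {x : X | rho A S0 ST x ≠ ⊤}

/- If `x₀ + t₀ • v ∈ A` and the domain `{x | ∃ c, x + c • v ∈ A}` absorbs every direction at
`x₀`, then `x₀ + (t₀ + 1) • v` lies in the core of `A`: for a direction `y`, pick
`x₀ + δ • y + m • v ∈ A` and take a convex combination with `x₀ + t₀ • v` of weight so small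
that its `v`-coefficient stays below `t₀ + 1`; monotonicity absorbs the remaining multiple of
`v ≥ 0`. For convex sets a one-sided step in each direction already gives a core point. -/

section AlgCore

variable {E : Type*} [AddCommGroup E] [Module ℝ E]

lemma mem_of_mem_algCore {A : Set E} {x : E} (hx : x ∈ algCore A) : x ∈ A := by
  obtain ⟨ε, hε, h⟩ := hx 0
  simpa using h 0 (by simpa using hε)

lemma algCore_mono {A B : Set E} (hAB : A ⊆ B) : algCore A ⊆ algCore B := fun _ hx y =>
  let ⟨ε, hε, h⟩ := hx y
  ⟨ε, hε, fun l hl => hAB (h l hl)⟩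

lemma algCore_univ : algCore (Set.univ : Set E) = Set.univ :=
  Set.eq_univ_of_forall fun _ _ => ⟨1, one_pos, fun _ _ => trivial⟩

lemma exists_pos_add_smul_mem_of_mem_algCore {A : Set E} {x : E} (hx : x ∈ algCore A)
    (y : E) : ∃ t : ℝ, 0 < t ∧ x + t • y ∈ A := by
  obtain ⟨ε, hε, h⟩ := hx y
  exact ⟨ε / 2, by positivity, h _ (by rw [abs_of_pos (by positivity)]; linarith)⟩

lemma Convex.mem_algCore_of_forall_exists_pos {A : Set E} (hconv : Convex ℝ A) {x : E}
    (hx : x ∈ A) (h : ∀ y : E, ∃ t : ℝ, 0 < t ∧ x + t • y ∈ A) : x ∈ algCore A := by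
  intro y
  obtain ⟨t₁, ht₁, h₁⟩ := h y
  obtain ⟨t₂, ht₂, h₂⟩ := h (-y)
  refine ⟨min t₁ t₂, lt_min ht₁ ht₂, fun l hl => ?_⟩
  rcases le_or_gt 0 l with hl0 | hl0
  · have hlt : l < t₁ := (le_abs_self l).trans_lt (hl.trans_le (min_le_left _ _))
    have := hconv.add_smul_mem hx h₁ (t := l / t₁) ⟨by positivity, by
      rw [div_le_one ht₁]; exact hlt.le⟩
    rwa [smul_smul, div_mul_cancel₀ _ ht₁.ne'] at this
  · have hlt : -l < t₂ := (neg_le_abs l).trans_lt (hl.trans_le (min_le_right _ _))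
    have := hconv.add_smul_mem hx h₂ (t := -l / t₂) ⟨div_nonneg (by linarith) ht₂.le, by
      rw [div_le_one ht₂]; exact hlt.le⟩
    rwa [smul_smul, div_mul_cancel₀ _ ht₂.ne', neg_smul, smul_neg, neg_neg] at this

section Ordered

variable [PartialOrder E] [AddLeftMono E] [PosSMulMono ℝ E]

lemma exists_pos_add_smul_mem_of_convex_comb {A : Set E} (hconv : Convex ℝ A)
    (hmono : MonotoneSet A) {v : E} (hv : 0 ≤ v) {x y : E} {t₀ m δ : ℝ} (hδ : 0 < δ)
    (h₀ : x + t₀ • v ∈ A) (h₁ : x + δ • y + m • v ∈ A) :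
    ∃ t : ℝ, 0 < t ∧ x + (t₀ + 1) • v + t • y ∈ A := by
  set lam := 1 / (|m - t₀| + 1) with hlam
  have hden : 0 < |m - t₀| + 1 := by positivity
  have hlam0 : 0 < lam := by positivity
  have hlam1 : lam ≤ 1 := by
    rw [hlam, div_le_one hden]; linarith [abs_nonneg (m - t₀)]
  have hcoeff : lam * (m - t₀) ≤ 1 := by
    calc lam * (m - t₀) ≤ lam * |m - t₀| := by gcongr; exact le_abs_self _
      _ ≤ lam * (|m - t₀| + 1) := by gcongr; linarith
      _ = 1 := by rw [hlam]; field_simp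
  have hcomb : (1 - lam) • (x + t₀ • v) + lam • (x + δ • y + m • v) ∈ A :=
    hconv h₀ h₁ (by linarith) hlam0.le (by ring)
  refine ⟨lam * δ, by positivity, hmono _ hcomb _ ?_⟩
  have hsplit : x + (t₀ + 1) • v + (lam * δ) • y =
      (1 - lam) • (x + t₀ • v) + lam • (x + δ • y + m • v) + (1 - lam * (m - t₀)) • v := by
    match_scalars <;> ring
  rw [hsplit]
  exact le_add_of_nonneg_right (smul_nonneg (by linarith) hv)

lemma algCore_nonempty_of_mem_algCore_translates {A : Set E} (hconv : Convex ℝ A)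
    (hmono : MonotoneSet A) {v : E} (hv : 0 ≤ v) {x : E}
    (hx : x ∈ algCore {z | ∃ c : ℝ, z + c • v ∈ A}) : (algCore A).Nonempty := by
  obtain ⟨t₀, ht₀⟩ := mem_of_mem_algCore hx
  have hshift : x + (t₀ + 1) • v ∈ A := hmono _ ht₀ _ (by
    rw [add_smul, one_smul, ← add_assoc]; exact le_add_of_nonneg_right hv)
  refine ⟨_, hconv.mem_algCore_of_forall_exists_pos hshift fun y => ?_⟩
  obtain ⟨δ, hδ, m, hm⟩ := exists_pos_add_smul_mem_of_mem_algCore hx y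
  exact exists_pos_add_smul_mem_of_convex_comb hconv hmono hv hδ ht₀ hm

end Ordered

lemma rhoDom_eq_setOf_exists_add_smul_mem {A : Set E} {S0 : ℝ} (hS0 : S0 ≠ 0) (ST : E) :
    rhoDom A S0 ST = {x | ∃ c : ℝ, x + c • ST ∈ A} := by
  ext x
  simp only [rhoDom, rho, ne_eq, sInf_eq_top, Set.forall_mem_image, EReal.coe_ne_top,
    imp_false, not_forall, not_not]
  constructor
  · rintro ⟨r, hr⟩
    exact ⟨r / S0, hr⟩
  · rintro ⟨c, hc⟩
    exact ⟨c * S0, by rwa [Set.mem_ofPred_eq, mul_div_cancel_right₀ _ hS0]⟩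

end AlgCore

theorem core_dom_nonempty_iff_core_nonempty (A : Set X) (S0 : ℝ) (ST : X)
    (hA : AcceptanceSet A) (hconv : Convex ℝ A)
    (hS0 : 0 < S0) (hST : 0 ≤ ST) :
    ((algCore (rhoDom A S0 ST)).Nonempty ↔ (algCore A).Nonempty) ∧
    ((∀ x : X, rho A S0 ST x ≠ ⊤) → (algCore A).Nonempty) := by
  have hdom := rhoDom_eq_setOf_exists_add_smul_mem (A := A) hS0.ne' ST
  have hA_sub : A ⊆ rhoDom A S0 ST := fun x hx => hdom ▸ ⟨0, by simpa using hx⟩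
  have hcore_dom : (algCore (rhoDom A S0 ST)).Nonempty → (algCore A).Nonempty := by
    rintro ⟨x, hx⟩
    rw [hdom] at hx
    exact algCore_nonempty_of_mem_algCore_translates hconv hA.2.2 hST hx
  refine ⟨⟨hcore_dom, fun ⟨x, hx⟩ => ⟨x, algCore_mono hA_sub hx⟩⟩, fun hfin => hcore_dom ?_⟩
  rw [show rhoDom A S0 ST = Set.univ from Set.eq_univ_of_forall hfin, algCore_univ]
  exact Set.univ_nonempty
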